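/- Let α/β = [a_1, ..., a_n] be a 1-regular continued fraction with a_1, a_2 > 0. Then the crossing number of α/β equals the sum of the |a_i| minus the number of indices i with a_i a_{i+1} < 0: cn(α/β) = Σ_{i=1}^n |a_i| - #{i : a_i a_{i+1} < 0}. -/

import Mathlib

/-- Evaluation of a finite continued fraction `[a₁, a₂, …, aₙ] = a₁ + 1/(a₂ + 1/(⋯ + 1/aₙ))`. -/
def cf : List ℤ → ℚ
  | [] => 0
  | a :: l => a + (cf l)⁻¹

/-- A continued fraction `[a₁, …, aₙ]` is 1-regular: all entries are nonzero,
`a_{n-1} aₙ > 0`, and there are no two consecutive sign changes. -/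
def OneRegular (l : List ℤ) : Prop :=
  (∀ a ∈ l, a ≠ 0) ∧
  (2 ≤ l.length → 0 < l[l.length - 2]! * l[l.length - 1]!) ∧
  (∀ i, i + 2 < l.length → l[i]! * l[i + 1]! < 0 → 0 < l[i + 1]! * l[i + 2]!)

/-- The number of sign changes `#{i : aᵢ a_{i+1} < 0}` of a continued fraction. -/
def signChanges (l : List ℤ) : ℕ :=
  ((List.range (l.length - 1)).filter fun i => decide (l[i]! * l[i + 1]! < 0)).length

/-!
Write `S = partialQuotientSum` for the sum of the partial quotients of the regular continued
fraction of a rational `r ≥ 0`, so that `S r = cn r` for `r > 1`. Every expansion of `r` with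
positive entries has entry sum `S r`, and `S` satisfies `S r⁻¹ = S r`, `S (a + v⁻¹) = a + S v`
and, for `y > 1`, `S (a - y⁻¹) = a - 1 + S y` (from `a - 1/y = (a - 1) + 1/(1 + 1/(y - 1))`).
Peeling off the first entry of a 1-regular expansion with positive head, a sign change therefore
costs exactly `1`. The condition `y > 1` holds because 1-regularity forbids a sign change right
after another one, which keeps the value of every tail following a sign change above `1` in
absolute value.
-/

def partialQuotientSum (r : ℚ) : ℤ :=
  ⌊r⌋ + if h : Int.fract r = 0 then 0 else partialQuotientSum (Int.fract r)⁻¹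
termination_by r.den
decreasing_by
  have hnum : 0 ≤ (Int.fract r).num := Rat.num_nonneg.mpr (Int.fract_nonneg r)
  have hlt : (Int.fract r).num < (Int.fract r).den :=
    Rat.num_lt_denom_iff.mpr (Int.fract_lt_one r)
  rw [Rat.den_inv_of_ne_zero h, ← Rat.den_intFract r]
  omega

theorem partialQuotientSum_intCast (n : ℤ) : partialQuotientSum n = n := by
  rw [partialQuotientSum]; simp

theorem partialQuotientSum_add_intCast (r : ℚ) (n : ℤ) :
    partialQuotientSum (r + n) = partialQuotientSum r + n := by
  rw [partialQuotientSum.eq_def (r + n), partialQuotientSum.eq_def r, Int.floor_add_intCast,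
    Int.fract_add_intCast]
  ring

theorem partialQuotientSum_eq_inv_of_lt_one {r : ℚ} (h0 : 0 < r) (h1 : r < 1) :
    partialQuotientSum r = partialQuotientSum r⁻¹ := by
  have hfloor : ⌊r⌋ = 0 := Int.floor_eq_zero_iff.mpr ⟨h0.le, h1⟩
  have hfract : Int.fract r = r := Int.fract_eq_self.mpr ⟨h0.le, h1⟩
  rw [partialQuotientSum, hfloor, hfract, dif_neg h0.ne', zero_add]

theorem partialQuotientSum_inv {r : ℚ} (hr : 0 ≤ r) :
    partialQuotientSum r⁻¹ = partialQuotientSum r := by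
  rcases hr.eq_or_lt with rfl | h0
  · rw [inv_zero]
  rcases lt_trichotomy r 1 with h1 | rfl | h1
  · exact (partialQuotientSum_eq_inv_of_lt_one h0 h1).symm
  · rw [inv_one]
  · rw [partialQuotientSum_eq_inv_of_lt_one (inv_pos.mpr h0) (inv_lt_one_of_one_lt₀ h1), inv_inv]

theorem partialQuotientSum_intCast_add_inv (a : ℤ) {v : ℚ} (hv : 0 ≤ v) :
    partialQuotientSum (a + v⁻¹) = a + partialQuotientSum v := by
  rw [add_comm, partialQuotientSum_add_intCast, partialQuotientSum_inv hv, add_comm]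

theorem partialQuotientSum_intCast_sub_inv (a : ℤ) {y : ℚ} (hy : 1 < y) :
    partialQuotientSum (a - y⁻¹) = a - 1 + partialQuotientSum y := by
  have hy1 : 0 < y - 1 := sub_pos.mpr hy
  have hsplit : (a : ℚ) - y⁻¹ = ((a - 1 : ℤ) : ℚ) + ((y - 1)⁻¹ + (1 : ℤ))⁻¹ := by
    field_simp
    push_cast
    ring
  have hy' : partialQuotientSum y = partialQuotientSum (y - 1) + 1 := by
    simpa using partialQuotientSum_add_intCast (y - 1) 1
  rw [hsplit, partialQuotientSum_intCast_add_inv _ (by positivity),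
    partialQuotientSum_add_intCast, partialQuotientSum_inv hy1.le, hy']

theorem cf_map_neg : ∀ l : List ℤ, cf (l.map Neg.neg) = -cf l
  | [] => by simp [cf]
  | a :: t => by
    rw [List.map_cons, cf, cf, cf_map_neg t, inv_neg]
    push_cast
    ring

theorem cf_cons_cons_eq_sub_inv (a b : ℤ) (u : List ℤ) :
    cf (a :: b :: u) = a - (cf ((b :: u).map Neg.neg))⁻¹ := by
  rw [cf_map_neg, cf, inv_neg, sub_neg_eq_add]

theorem cf_nonneg : ∀ {l : List ℤ}, (∀ x ∈ l, 0 ≤ x) → 0 ≤ cf l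
  | [], _ => le_rfl
  | a :: t, h => by
    have ha : (0 : ℚ) ≤ a := by exact_mod_cast h a List.mem_cons_self
    have ht : 0 ≤ cf t := cf_nonneg fun x hx => h x (List.mem_cons_of_mem a hx)
    rw [cf]
    positivity

theorem getElem!_map_neg (l : List ℤ) (i : ℕ) : (l.map Neg.neg)[i]! = -l[i]! := by
  simp only [List.getElem!_eq_getElem?_getD, List.getElem?_map]
  cases l[i]? <;> simp

theorem signChanges_cons_cons (a b : ℤ) (u : List ℤ) :
    signChanges (a :: b :: u) = (if a * b < 0 then 1 else 0) + signChanges (b :: u) := by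
  simp only [signChanges, List.length_cons, Nat.add_sub_cancel, List.range_succ_eq_map,
    List.filter_cons, List.filter_map, List.getElem!_cons_zero, List.getElem!_cons_succ]
  by_cases h : a * b < 0 <;> simp [h, Function.comp_def, add_comm]

theorem signChanges_map_neg (l : List ℤ) : signChanges (l.map Neg.neg) = signChanges l := by
  simp only [signChanges, List.length_map, getElem!_map_neg, neg_mul_neg]

theorem sum_map_abs_map_neg (l : List ℤ) :
    ((l.map Neg.neg).map abs).sum = (l.map abs).sum := by
  simp [Function.comp_def]

namespace OneRegular

theorem map_neg {l : List ℤ} (h : OneRegular l) : OneRegular (l.map Neg.neg) := by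
  obtain ⟨hne, hlast, hchange⟩ := h
  refine ⟨?_, ?_, ?_⟩
  · simpa only [List.forall_mem_map, ne_eq, neg_eq_zero] using hne
  · simpa only [List.length_map, getElem!_map_neg, neg_mul_neg] using hlast
  · simpa only [List.length_map, getElem!_map_neg, neg_mul_neg] using hchange

theorem tail {a : ℤ} {t : List ℤ} (h : OneRegular (a :: t)) : OneRegular t := by
  obtain ⟨hne, hlast, hchange⟩ := h
  refine ⟨fun x hx => hne x (List.mem_cons_of_mem a hx), fun ht => ?_, fun i hi hi' => ?_⟩
  · have := hlast (by simp; omega)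
    rwa [List.length_cons, show t.length + 1 - 2 = (t.length - 2) + 1 by omega,
      show t.length + 1 - 1 = (t.length - 1) + 1 by omega, List.getElem!_cons_succ,
      List.getElem!_cons_succ] at this
  · simpa using hchange (i + 1) (by simp; omega) (by simpa using hi')

theorem mul_pos_of_pair {a b : ℤ} (h : OneRegular [a, b]) : 0 < a * b := by
  simpa using h.2.1

theorem mul_pos_of_mul_neg {a b c : ℤ} {u : List ℤ} (h : OneRegular (a :: b :: c :: u))
    (hab : a * b < 0) : 0 < b * c := by
  simpa using h.2.2 0 (by simp) (by simpa using hab)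

end OneRegular

theorem sum_eq_partialQuotientSum_cf : ∀ {q : List ℤ}, (∀ x ∈ q, 0 < x) →
    q.sum = partialQuotientSum (cf q)
  | [], _ => by rw [List.sum_nil, cf]; exact_mod_cast (partialQuotientSum_intCast 0).symm
  | a :: t, h => by
    have ht : ∀ x ∈ t, 0 < x := fun x hx => h x (List.mem_cons_of_mem a hx)
    have hcf : 0 ≤ cf t := cf_nonneg fun x hx => (ht x hx).le
    rw [List.sum_cons, cf, partialQuotientSum_intCast_add_inv a hcf,
      sum_eq_partialQuotientSum_cf ht]

theorem OneRegular.sub_one_lt_cf : ∀ {a : ℤ} {t : List ℤ}, OneRegular (a :: t) → 0 < a →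
    (a - 1 : ℚ) < cf (a :: t)
  | a, [], _, _ => by simp [cf]
  | a, b :: u, h, ha => by
    rcases (h.1 b (by simp)).lt_or_gt with hb | hb
    · -- After the sign change at `a, b` the entries `b, c` have equal signs,
      -- so `-b + 1/(-c + ⋯) > 1` even when `b = -1`.
      have hy : 1 < cf ((b :: u).map Neg.neg) := by
        rcases (show b ≤ -2 ∨ b = -1 by omega) with hb2 | hb1
        · have hb2' : (b : ℚ) ≤ -2 := by exact_mod_cast hb2
          have := sub_one_lt_cf h.tail.map_neg (neg_pos.mpr hb)
          push_cast at this
          rw [List.map_cons]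
          linarith
        match u, h with
        | [], h =>
          nlinarith [h.mul_pos_of_pair]
        | c :: u', h =>
          have hc : c < 0 := by nlinarith [h.mul_pos_of_mul_neg (by nlinarith)]
          have hv : 0 < cf (-c :: u'.map Neg.neg) := by
            have hc' : (c : ℚ) ≤ -1 := by exact_mod_cast (show c ≤ -1 by omega)
            have := sub_one_lt_cf h.tail.tail.map_neg (neg_pos.mpr hc)
            push_cast at this
            linarith
          rw [List.map_cons, List.map_cons, cf, hb1]
          have := inv_pos.mpr hv
          push_cast
          linarith
      rw [cf_cons_cons_eq_sub_inv]
      linarith [inv_lt_one_of_one_lt₀ hy]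
    · have hb' : (1 : ℚ) ≤ b := by exact_mod_cast hb
      have := sub_one_lt_cf h.tail hb
      rw [cf]
      linarith [inv_nonneg.mpr (show 0 ≤ cf (b :: u) by linarith)]
termination_by _ t => t.length

theorem OneRegular.one_lt_cf_neg_tail {a b : ℤ} {u : List ℤ} (h : OneRegular (a :: b :: u))
    (ha : 0 < a) (hb : b < 0) : 1 < cf ((b :: u).map Neg.neg) := by
  -- `a - 1 < cf (a :: b :: u) = a - y⁻¹` with `y > 0` forces `y > 1`.
  have hb' : (b : ℚ) ≤ -1 := by exact_mod_cast (show b ≤ -1 by omega)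
  have hy := h.tail.map_neg.sub_one_lt_cf (neg_pos.mpr hb)
  have hcf := h.sub_one_lt_cf ha
  push_cast at hy
  rw [← List.map_cons] at hy
  rw [cf_cons_cons_eq_sub_inv] at hcf
  exact (inv_lt_one₀ (by linarith)).mp (by linarith)

theorem OneRegular.partialQuotientSum_cf :
    ∀ {a : ℤ} {t : List ℤ}, OneRegular (a :: t) → 0 < a →
      partialQuotientSum (cf (a :: t)) = ((a :: t).map abs).sum - signChanges (a :: t)
  | a, [], _, ha => by
    rw [cf, cf, inv_zero, add_zero, partialQuotientSum_intCast]
    simp [signChanges, abs_of_pos ha]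
  | a, b :: u, h, ha => by
    rcases (h.1 b (by simp)).lt_or_gt with hb | hb
    · have ih := h.tail.map_neg.partialQuotientSum_cf (neg_pos.mpr hb)
      rw [← List.map_cons, sum_map_abs_map_neg, signChanges_map_neg] at ih
      rw [cf_cons_cons_eq_sub_inv,
        partialQuotientSum_intCast_sub_inv a (h.one_lt_cf_neg_tail ha hb), ih,
        signChanges_cons_cons, if_pos (by nlinarith)]
      simp [abs_of_pos ha]
      ring
    · have ih := h.tail.partialQuotientSum_cf hb
      have hv : 0 ≤ cf (b :: u) := by
        have hb' : (1 : ℚ) ≤ b := by exact_mod_cast hb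
        linarith [h.tail.sub_one_lt_cf hb]
      rw [cf, partialQuotientSum_intCast_add_inv a hv, ih, signChanges_cons_cons,
        if_neg (by nlinarith)]
      simp [abs_of_pos ha]
      ring
termination_by _ t => t.length

theorem crossing_number_of_one_regular_general (l : List ℤ)
    (hreg : OneRegular l) (h1 : 0 < l[0]!)
    (q : List ℤ) (hq : ∀ x ∈ q, 0 < x) (hval : cf q = cf l) :
    q.sum = (l.map fun a => |a|).sum - (signChanges l : ℤ) := by
  obtain _ | ⟨a, t⟩ := l
  · simp at h1
  rw [sum_eq_partialQuotientSum_cf hq, hval, hreg.partialQuotientSum_cf (by simpa using h1)]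

/-- The crossing number `cn(α/β)` of a rational `> 1` is the sum `q₁ + ⋯ + qₙ` of the
partial quotients of any classical continued fraction expansion with positive entries.
If `α/β = [a₁, …, aₙ]` is 1-regular with `a₁, a₂ > 0`, then
`cn(α/β) = Σ |aᵢ| - #{i : aᵢ a_{i+1} < 0}`. -/
theorem crossing_number_of_one_regular (l : List ℤ) (hn : 2 ≤ l.length)
    (hreg : OneRegular l) (h1 : 0 < l[0]!) (h2 : 0 < l[1]!)
    (q : List ℤ) (hq : ∀ x ∈ q, 0 < x) (hval : cf q = cf l) :
    q.sum = (l.map fun a => |a|).sum - (signChanges l : ℤ) :=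
  crossing_number_of_one_regular_general l hreg h1 q hq hval
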